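/- Let u, ũ : ℝ/ℤ → ℝⁿ be C¹ curves with bil(u) < ∞. If ‖(ũ − u)'‖_{L^∞} ≤ 1/(2 bil u), then bil(ũ) ≤ 2 bil(u); in particular ũ is embedded and regular. -/

import Mathlib

open MeasureTheory Set Filter
open scoped RealInnerProductSpace ENNReal Topology

noncomputable section

/-- The distance on the circle `ℝ/ℤ` between the points represented by `x` and `y`. -/
def circDist (x y : ℝ) : ℝ := ‖((x - y : ℝ) : AddCircle (1 : ℝ))‖

/-- The representative of `z` modulo `1` lying in `(-1/2, 1/2]`. -/
def wrap (z : ℝ) : ℝ := 1 / 2 - Int.fract (1 / 2 - z)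

/-- Squared wedge norm `|a ∧ b|² = |a|²|b|² - ⟨a,b⟩²`. -/
def wedgeSq {n : ℕ} (a b : EuclideanSpace ℝ (Fin n)) : ℝ :=
  ‖a‖ ^ 2 * ‖b‖ ^ 2 - ⟪a, b⟫ ^ 2

/-- Wedge inner product `⟨a∧b, c∧d⟩ = ⟨a,c⟩⟨b,d⟩ - ⟨a,d⟩⟨b,c⟩`. -/
def wedgeInner {n : ℕ} (a b c d : EuclideanSpace ℝ (Fin n)) : ℝ :=
  ⟪a, c⟫ * ⟪b, d⟫ - ⟪a, d⟫ * ⟪b, c⟫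

/-- Fundamental domain for double integrals over `(ℝ/ℤ)²`. -/
def unitSq : Set (ℝ × ℝ) := Ioc (0 : ℝ) 1 ×ˢ Ioc (0 : ℝ) 1

/-- The tangent-point functional `TP` (extended-real-valued). -/
def TPe {n : ℕ} (q : ℝ) (u : ℝ → EuclideanSpace ℝ (Fin n)) : ℝ≥0∞ :=
  ENNReal.ofReal (1 / q) *
    ∫⁻ p in unitSq, ENNReal.ofReal
      (wedgeSq (deriv u p.2) (u p.1 - u p.2) ^ (q / 2) / ‖u p.1 - u p.2‖ ^ (2 * q))

/-- The tangent-point functional `TP` (real-valued). -/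
def TPr {n : ℕ} (q : ℝ) (u : ℝ → EuclideanSpace ℝ (Fin n)) : ℝ := (TPe q u).toReal

/-- The `q`-th power of the Sobolev–Slobodeckii seminorm `[f]_{W^{s,q}}` on `ℝ/ℤ`. -/
def sobSemPow {n : ℕ} (s q : ℝ) (f : ℝ → EuclideanSpace ℝ (Fin n)) : ℝ≥0∞ :=
  ∫⁻ p in unitSq, ENNReal.ofReal (‖f p.1 - f p.2‖ ^ q / circDist p.1 p.2 ^ (1 + s * q))

/-- The `W^{s,q}`-norm `‖f‖_{L^q} + [f]_{W^{s,q}}`. -/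
def Wnorm {n : ℕ} (s q : ℝ) (f : ℝ → EuclideanSpace ℝ (Fin n)) : ℝ :=
  (∫ x in Ioc (0 : ℝ) 1, ‖f x‖ ^ q) ^ (1 / q) + (sobSemPow s q f).toReal ^ (1 / q)

/-- The bi-Lipschitz constant `bil(u) = sup_{x ≢ y} |x-y|_{ℝ/ℤ}/|u(x)-u(y)|`. -/
def bil {n : ℕ} (u : ℝ → EuclideanSpace ℝ (Fin n)) : ℝ≥0∞ :=
  ⨆ (x : ℝ) (y : ℝ) (_ : circDist x y ≠ 0),
    ENNReal.ofReal (circDist x y) / ENNReal.ofReal ‖u x - u y‖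

/-- The `L^∞`-norm of the derivative of `u`. -/
def linfD {n : ℕ} (u : ℝ → EuclideanSpace ℝ (Fin n)) : ℝ≥0∞ :=
  ⨆ x : ℝ, (‖deriv u x‖₊ : ℝ≥0∞)

/-- A periodic curve is embedded if it is injective on the circle `ℝ/ℤ`. -/
def Embedded {n : ℕ} (u : ℝ → EuclideanSpace ℝ (Fin n)) : Prop :=
  ∀ x y : ℝ, u x = u y → ((x : AddCircle (1 : ℝ)) = (y : AddCircle (1 : ℝ)))

/-- A curve is regular if `min_{ℝ/ℤ} |u'| > 0`. -/
def Regular {n : ℕ} (u : ℝ → EuclideanSpace ℝ (Fin n)) : Prop :=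
  0 < ⨅ x : ℝ, ‖deriv u x‖

/-- Orthogonal projection of `b` onto the orthogonal complement of `ℝ a`. -/
def projPerp {n : ℕ} (a b : EuclideanSpace ℝ (Fin n)) : EuclideanSpace ℝ (Fin n) :=
  b - (⟪b, a⟫ / ‖a‖ ^ 2) • a

/-- The classical tangent-point functional (extended-real-valued). -/
def TPcle {n : ℕ} (q : ℝ) (u : ℝ → EuclideanSpace ℝ (Fin n)) : ℝ≥0∞ :=
  ENNReal.ofReal (1 / q) *
    ∫⁻ p in unitSq, ENNReal.ofReal
      (‖projPerp (deriv u p.2) (u p.1 - u p.2)‖ ^ q / ‖u p.1 - u p.2‖ ^ (2 * q) *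
        (‖deriv u p.1‖ * ‖deriv u p.2‖))

/-- The integrand of the functional `M(u; v, w)`. -/
def Mintegrand {n : ℕ} (q : ℝ) (u v w : ℝ → EuclideanSpace ℝ (Fin n)) (p : ℝ × ℝ) : ℝ :=
  wedgeSq (deriv u p.2) (u p.1 - u p.2) ^ ((q - 2) / 2) / ‖u p.1 - u p.2‖ ^ (2 * q) *
    wedgeInner (deriv u p.2) (u p.1 - u p.2) (deriv v p.2)
      (w p.1 - w p.2 - wrap (p.1 - p.2) • deriv w p.2)

/-- The functional `M(u; v, w)` appearing in the first variation of `TP`. -/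
def Mfun {n : ℕ} (q : ℝ) (u v w : ℝ → EuclideanSpace ℝ (Fin n)) : ℝ :=
  ∫ p in unitSq, Mintegrand q u v w p

/-- The integrand of the functional `A(u; v, w)`. -/
def Aintegrand {n : ℕ} (q : ℝ) (u v w : ℝ → EuclideanSpace ℝ (Fin n)) (p : ℝ × ℝ) : ℝ :=
  wedgeSq (deriv u p.2) (u p.1 - u p.2) ^ (q / 2) / ‖u p.1 - u p.2‖ ^ (2 * q + 2) *
    ⟪v p.1 - v p.2, w p.1 - w p.2⟫

/-- The functional `A(u; v, w)` appearing in the first variation of `TP`. -/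
def Afun {n : ℕ} (q : ℝ) (u v w : ℝ → EuclideanSpace ℝ (Fin n)) : ℝ :=
  ∫ p in unitSq, Aintegrand q u v w p

/-- The first variation `δTP(u)[w] = M(u;u,w) + M(u;w,u) - 2A(u;u,w)`. -/
def deltaTP {n : ℕ} (q : ℝ) (u w : ℝ → EuclideanSpace ℝ (Fin n)) : ℝ :=
  Mfun q u u w + Mfun q u w u - 2 * Afun q u u w

/-- The `H²` inner product on periodic curves. -/
def H2inner (v w : ℝ → EuclideanSpace ℝ (Fin 3)) : ℝ :=
  ∫ x in Ioc (0 : ℝ) 1,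
    (⟪v x, w x⟫ + ⟪deriv v x, deriv w x⟫ + ⟪deriv (deriv v) x, deriv (deriv w) x⟫)

/-- The total energy `E(u) = (κ/2)∫|u''|² + ρ TP(u)`. -/
def energyE (κ ρ q : ℝ) (u : ℝ → EuclideanSpace ℝ (Fin 3)) : ℝ :=
  κ / 2 * (∫ x in Ioc (0 : ℝ) 1, ‖deriv (deriv u) x‖ ^ 2) + ρ * TPr q u

/-!
With `L = bil u`, the bound reads `|x - y|_{ℝ/ℤ} ≤ L |u x - u y|`. The mean value theorem,
applied to the periodic difference `w = ũ - u` between `x` and the translate of `y` nearest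
to `x`, gives `|w x - w y| ≤ |x - y|_{ℝ/ℤ} / (2L)`, so by the triangle inequality
`|x - y|_{ℝ/ℤ} ≤ 2L |ũ x - ũ y|`. This gives `bil ũ ≤ 2L` and injectivity at once, and letting
`y → x` gives `|ũ'| ≥ 1 / (2L)`.
-/

lemma circDist_eq_abs {x y : ℝ} (h : |x - y| ≤ 1 / 2) : circDist x y = |x - y| := by
  rw [circDist, AddCircle.norm_coe_eq_abs_iff (1 : ℝ) one_ne_zero]
  simpa using h

lemma circDist_eq_abs_sub_round (x y : ℝ) : circDist x y = |x - y - round (x - y)| := by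
  rw [circDist, AddCircle.norm_eq]
  norm_num

lemma circDist_nonneg (x y : ℝ) : 0 ≤ circDist x y := norm_nonneg _

lemma coe_eq_coe_iff_circDist_eq_zero (x y : ℝ) :
    (x : AddCircle (1 : ℝ)) = y ↔ circDist x y = 0 := by
  rw [circDist, norm_eq_zero, AddCircle.coe_sub, sub_eq_zero]

lemma norm_sub_le_mul_circDist {E : Type*} [NormedAddCommGroup E] [NormedSpace ℝ E]
    {f : ℝ → E} {C : ℝ} (hf : Differentiable ℝ f) (hper : Function.Periodic f 1)
    (hC : ∀ x, ‖deriv f x‖ ≤ C) (x y : ℝ) : ‖f x - f y‖ ≤ C * circDist x y := by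
  set k := round (x - y)
  have hshift : f (y + k) = f y := by simpa using (hper.int_mul k) y
  calc ‖f x - f y‖ = ‖f x - f (y + k)‖ := by rw [hshift]
    _ ≤ C * ‖x - (y + k)‖ :=
      convex_univ.norm_image_sub_le_of_norm_deriv_le (fun z _ => hf z) (fun z _ => hC z)
        (mem_univ _) (mem_univ _)
    _ = C * circDist x y := by rw [circDist_eq_abs_sub_round, Real.norm_eq_abs, sub_sub]

/-- `bil u ≤ L` in the form of `AntilipschitzWith`, with the circle distance in the source. -/
def CircAntilipschitzWith {n : ℕ} (L : ℝ) (u : ℝ → EuclideanSpace ℝ (Fin n)) : Prop :=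
  ∀ x y, circDist x y ≤ L * ‖u x - u y‖

namespace CircAntilipschitzWith

variable {n : ℕ} {L : ℝ} {u v : ℝ → EuclideanSpace ℝ (Fin n)}

lemma of_bil_lt_top (hbil : bil u < ⊤) : CircAntilipschitzWith (bil u).toReal u := by
  intro x y
  rcases eq_or_ne (circDist x y) 0 with h0 | h0
  · rw [h0]; positivity
  have hd : 0 < circDist x y := (circDist_nonneg x y).lt_of_ne' h0
  have hle : ENNReal.ofReal (circDist x y) / ENNReal.ofReal ‖u x - u y‖ ≤ bil u :=
    le_iSup₂_of_le x y (le_iSup_of_le h0 le_rfl)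
  have hne : ENNReal.ofReal ‖u x - u y‖ ≠ 0 := by
    intro h
    rw [h, ENNReal.div_zero (ENNReal.ofReal_pos.mpr hd).ne'] at hle
    exact hbil.ne (top_le_iff.mp hle)
  have hmul := (ENNReal.div_le_iff hne ENNReal.ofReal_ne_top).mp hle
  rwa [← ENNReal.ofReal_toReal hbil.ne, ← ENNReal.ofReal_mul ENNReal.toReal_nonneg,
    ENNReal.ofReal_le_ofReal_iff (by positivity)] at hmul

lemma pos (hu : CircAntilipschitzWith L u) : 0 < L := by
  have hhalf : circDist 0 (1 / 2) = 1 / 2 := by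
    rw [circDist_eq_abs] <;> norm_num [abs_of_nonneg]
  have := hu 0 (1 / 2)
  rw [hhalf] at this
  by_contra! hL
  nlinarith [norm_nonneg (u 0 - u (1 / 2))]

lemma bil_le (hu : CircAntilipschitzWith L u) : bil u ≤ ENNReal.ofReal L := by
  refine iSup₂_le fun x y => iSup_le fun h0 => ?_
  have hd : 0 < circDist x y := (circDist_nonneg x y).lt_of_ne' h0
  have hpos : 0 < L * ‖u x - u y‖ := hd.trans_le (hu x y)
  have hnorm : 0 < ‖u x - u y‖ := pos_of_mul_pos_right hpos hu.pos.le
  rw [ENNReal.div_le_iff (ENNReal.ofReal_pos.mpr hnorm).ne' ENNReal.ofReal_ne_top,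
    ← ENNReal.ofReal_mul hu.pos.le]
  exact ENNReal.ofReal_le_ofReal (hu x y)

lemma embedded (hu : CircAntilipschitzWith L u) : Embedded u := by
  intro x y hxy
  rw [coe_eq_coe_iff_circDist_eq_zero]
  have := hu x y
  rw [hxy, sub_self, norm_zero, mul_zero] at this
  exact this.antisymm (circDist_nonneg x y)

lemma inv_le_norm_deriv (hu : CircAntilipschitzWith L u) {x : ℝ} (hdiff : DifferentiableAt ℝ u x) :
    L⁻¹ ≤ ‖deriv u x‖ := by
  have hslope : Tendsto (fun y => ‖slope u x y‖) (𝓝[≠] x) (𝓝 ‖deriv u x‖) :=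
    (continuous_norm.tendsto _).comp (hasDerivAt_iff_tendsto_slope.mp hdiff.hasDerivAt)
  refine ge_of_tendsto hslope ?_
  filter_upwards [nhdsWithin_le_nhds (Metric.ball_mem_nhds x one_half_pos),
    self_mem_nhdsWithin] with y hy hyx
  have habs : 0 < |y - x| := abs_pos.mpr (sub_ne_zero.mpr hyx)
  have hkey : |y - x| ≤ L * ‖u y - u x‖ := by
    rw [← circDist_eq_abs (Real.dist_eq y x ▸ (Metric.mem_ball.mp hy).le)]
    exact hu y x
  rw [slope_def_module, norm_smul, norm_inv, Real.norm_eq_abs, inv_mul_eq_div,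
    le_div_iff₀ habs, inv_mul_eq_div, div_le_iff₀' hu.pos]
  exact hkey

lemma regular (hu : CircAntilipschitzWith L u) (hdiff : Differentiable ℝ u) : Regular u :=
  (inv_pos.mpr hu.pos).trans_le (le_ciInf fun x => hu.inv_le_norm_deriv (hdiff x))

lemma of_norm_sub_sub_le (hu : CircAntilipschitzWith L u) {K : ℝ} (hKL : K * L < 1)
    (hclose : ∀ x y, ‖(v x - u x) - (v y - u y)‖ ≤ K * circDist x y) :
    CircAntilipschitzWith (L / (1 - K * L)) v := by
  intro x y
  have htri : ‖u x - u y‖ ≤ ‖v x - v y‖ + ‖(v x - u x) - (v y - u y)‖ := by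
    calc ‖u x - u y‖ = ‖(v x - v y) - ((v x - u x) - (v y - u y))‖ := by congr 1; abel
      _ ≤ _ := norm_sub_le _ _
  have h1 : (1 - K * L) * circDist x y ≤ L * ‖v x - v y‖ := by
    nlinarith [hu x y, hclose x y, hu.pos]
  rw [div_mul_eq_mul_div, le_div_iff₀ (sub_pos.mpr hKL)]
  linarith

end CircAntilipschitzWith

/-- Lemma 3.7, bi-Lipschitz radius: if `bil(u) < ∞` and
`‖(ũ - u)'‖_{L^∞} ≤ 1/(2 bil u)`, then `bil(ũ) ≤ 2 bil(u)`; in particular `ũ`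
is embedded and regular. -/
theorem biLipschitz_radius (n : ℕ) (u v : ℝ → EuclideanSpace ℝ (Fin n))
    (huC1 : ContDiff ℝ 1 u) (huper : Function.Periodic u 1)
    (hvC1 : ContDiff ℝ 1 v) (hvper : Function.Periodic v 1)
    (hbil : bil u < ⊤)
    (hclose : ∀ x, ‖deriv (fun t => v t - u t) x‖ ≤ 1 / (2 * (bil u).toReal)) :
    bil v ≤ 2 * bil u ∧ Embedded v ∧ Regular v := by
  have hu := CircAntilipschitzWith.of_bil_lt_top hbil
  set L := (bil u).toReal
  have hL := hu.pos
  have hdiff : Differentiable ℝ (fun t => v t - u t) :=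
    (hvC1.sub huC1).differentiable one_ne_zero
  have hlip := norm_sub_le_mul_circDist hdiff (hvper.sub huper) hclose
  have hv : CircAntilipschitzWith (2 * L) v := by
    have h := hu.of_norm_sub_sub_le (by field_simp; norm_num) hlip
    rwa [show L / (1 - 1 / (2 * L) * L) = 2 * L by field_simp; ring] at h
  refine ⟨?_, hv.embedded, hv.regular (hvC1.differentiable one_ne_zero)⟩
  rw [← ENNReal.ofReal_toReal hbil.ne, ← ENNReal.ofReal_ofNat 2, ← ENNReal.ofReal_mul zero_le_two]
  exact hv.bil_le
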